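/- arXiv:1209.2392 — 4 statements merged into one kernel-verified Lean document; each statement's English description precedes it below -/
import Mathlib

section
/- Let U_1,...,U_m be unitary matrices on a finite-dimensional complex Hilbert space such that Σ_{i=1}^m U_i A U_i† = c·(tr A)·1 for all matrices A, where c is a constant. Then for any matrix B, Σ_{i=1}^m U_i† B U_i = c·(tr B)·1. -/
open scoped Matrix
open Finset

/-- If unitaries U₁,...,U_m satisfy Σᵢ Uᵢ A Uᵢ† = c (tr A) 1 for all A,
    then Σᵢ Uᵢ† B Uᵢ = c (tr B) 1 for all B. -/
theorem stmt4 (d m : ℕ) (U : Fin m → Matrix (Fin d) (Fin d) ℂ)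
    (hU : ∀ i, U i ∈ Matrix.unitaryGroup (Fin d) ℂ) (c : ℂ)
    (h : ∀ A : Matrix (Fin d) (Fin d) ℂ, ∑ i, U i * A * (U i)ᴴ = (c * A.trace) • 1)
    (B : Matrix (Fin d) (Fin d) ℂ) :
    ∑ i, (U i)ᴴ * B * U i = (c * B.trace) • 1 := by
  rcases Nat.eq_zero_or_pos d with hd | hd
  · subst hd
    ext a b
    exact absurd a.2 (by simp)
  have key : ∀ k l a b : Fin d, ∑ i, U i a k * (starRingEnd ℂ) (U i b l)
      = c * (if k = l then 1 else 0) * (if a = b then 1 else 0) := by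
    intro k l a b
    have := congrFun (congrFun (h (Matrix.single k l 1)) a) b
    simp only [Matrix.sum_apply, Matrix.mul_apply, Matrix.single,
      Matrix.conjTranspose_apply, Matrix.smul_apply, Matrix.one_apply,
      Matrix.trace, Matrix.diag, Matrix.of_apply] at this
    simp only [mul_ite, mul_one, mul_zero, ite_and, Finset.sum_ite_eq', Finset.mem_univ,
      if_true, Finset.sum_ite_eq, smul_eq_mul] at this
    simpa [eq_comm] using this
  have hconj : (starRingEnd ℂ) c = c := by
    have e : Fin d := ⟨0, hd⟩
    have h1 := key e e e e
    simp only [if_true, if_pos rfl, mul_one] at h1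
    rw [← h1, map_sum]
    refine Finset.sum_congr rfl fun i _ => ?_
    simp [mul_comm]
  ext a b
  have entry : ∀ k l : Fin d, ∑ i, (starRingEnd ℂ) (U i k a) * U i l b
      = c * (if a = b then 1 else 0) * (if k = l then 1 else 0) := by
    intro k l
    have := congrArg (starRingEnd ℂ) (key a b k l)
    rw [map_sum] at this
    simp only [map_mul, RingHom.id_apply, Complex.conj_conj] at this
    rw [this, hconj]
    split_ifs <;> simp
  simp only [Matrix.sum_apply, Matrix.mul_apply, Matrix.conjTranspose_apply,
    Matrix.smul_apply, Matrix.one_apply, smul_eq_mul, Matrix.trace, Matrix.diag]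
  rw [Finset.sum_comm]
  calc ∑ x : Fin d, ∑ i : Fin m, (∑ y, (starRingEnd ℂ) (U i y a) * B y x) * U i x b
      = ∑ x : Fin d, ∑ y : Fin d, B y x * ∑ i, (starRingEnd ℂ) (U i y a) * U i x b := by
        refine Finset.sum_congr rfl fun x _ => ?_
        simp only [Finset.sum_mul]
        rw [Finset.sum_comm]
        refine Finset.sum_congr rfl fun y _ => ?_
        rw [Finset.mul_sum]
        refine Finset.sum_congr rfl fun i _ => ?_
        ring
    _ = c * (∑ x, B x x) * if a = b then 1 else 0 := by
        simp only [entry, mul_ite, mul_one, mul_zero, Finset.sum_ite_eq',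
          Finset.sum_ite_eq, Finset.mem_univ, if_true]
        split_ifs <;> simp [Finset.mul_sum, mul_comm]
end

section
/- For the generalized Pauli matrices X_d, Z_d on ℂ^d, the family {X_d^i Z_d^j : 0 ≤ i,j ≤ d−1} satisfies Σ_{i,j=0}^{d-1} X_d^i Z_d^j A (X_d^i Z_d^j)† = d·(tr A)·1 for every d×d matrix A. -/
open scoped Matrix

/-- The generalized Pauli (shift) matrix on ℂ^d. -/
noncomputable def Xd (d : ℕ) [NeZero d] : Matrix (Fin d) (Fin d) ℂ :=
  Matrix.of fun i j => if j = i + 1 then 1 else 0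

/-- The generalized Pauli (clock) matrix on ℂ^d. -/
noncomputable def Zd (d : ℕ) [NeZero d] : Matrix (Fin d) (Fin d) ℂ :=
  Matrix.diagonal fun i => Complex.exp (2 * Real.pi * Complex.I * ((i : ℕ) + 1) / d)

/-!
Conjugating `B` by `Z^j` multiplies its entry `(a, b)` by `(ω_a / ω_b)^j`, where the `ω_x` are
distinct `d`-th roots of unity; summing the geometric series over `j` kills the off-diagonal
entries, so `∑_j Z^j B Z^{-j} = d · diag B`. The powers of `X` are the permutation matrices of
the translations of `ℤ/d`, so conjugating a diagonal matrix by `X^i` translates its diagonal, and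
the sum of all translates of the diagonal is the trace at every position.
-/

open Complex Finset Matrix
open Fin.NatCast

theorem geom_sum_eq_zero_of_pow_eq_one {K : Type*} [Field K] {μ : K} {n : ℕ}
    (hμ : μ ^ n = 1) (h1 : μ ≠ 1) : ∑ j ∈ range n, μ ^ j = 0 := by
  rw [geom_sum_eq h1, hμ, sub_self, zero_div]

theorem IsPrimitiveRoot.injective_pow_val_succ {M : Type*} [CommMonoid M] {ζ : M} {d : ℕ}
    [NeZero d] (hζ : IsPrimitiveRoot ζ d) :
    Function.Injective fun x : Fin d => ζ ^ ((x : ℕ) + 1) := by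
  intro a b h
  simp only [pow_succ] at h
  exact Fin.ext (hζ.pow_inj a.isLt b.isLt ((hζ.isUnit (NeZero.ne d)).mul_right_cancel h))

namespace Matrix

variable {n R : Type*} [Fintype n] [DecidableEq n]

theorem permMatrix_mul_mul_conjTranspose [NonAssocSemiring R] [StarRing R] (σ : Equiv.Perm n)
    (B : Matrix n n R) : σ.permMatrix R * B * (σ.permMatrix R)ᴴ = B.submatrix σ σ := by
  rw [conjTranspose_permMatrix, PEquiv.toMatrix_toPEquiv_mul, PEquiv.mul_toMatrix_toPEquiv]
  rfl

theorem sum_permMatrix_addRight_mul_diagonal_mul_conjTranspose {G : Type*} [AddGroup G]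
    [Fintype G] [DecidableEq G] [Semiring R] [StarRing R] (v : G → R) :
    ∑ g : G, (Equiv.addRight g).permMatrix R * diagonal v * ((Equiv.addRight g).permMatrix R)ᴴ =
      (∑ x, v x) • 1 := by
  ext a b
  simp only [permMatrix_mul_mul_conjTranspose, sum_apply, submatrix_apply, Equiv.coe_addRight,
    diagonal_apply, add_left_inj, smul_apply, one_apply, smul_eq_mul]
  split_ifs
  · rw [mul_one]
    exact Fintype.sum_equiv (Equiv.addLeft a) _ _ fun g => rfl
  · simp

theorem sum_range_diagonal_pow_mul_mul_conjTranspose {d : ℕ} {w : n → ℂ}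
    (hw : ∀ x, w x ^ d = 1) (hinj : Function.Injective w) (B : Matrix n n ℂ) :
    ∑ j ∈ range d, diagonal w ^ j * B * (diagonal w ^ j)ᴴ = diagonal fun x => d * B x x := by
  obtain rfl | hd := eq_or_ne d 0
  · simp
  have hne : ∀ x, w x ≠ 0 := fun x h => by simpa [h, hd] using hw x
  have hconj : ∀ x, star (w x) = (w x)⁻¹ := fun x =>
    (inv_eq_conj (norm_eq_one_of_pow_eq_one (hw x) hd)).symm
  have hentry : ∀ a b j,
      (diagonal w ^ j * B * (diagonal w ^ j)ᴴ) a b = (w a * (w b)⁻¹) ^ j * B a b := by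
    intro a b j
    simp only [diagonal_pow, diagonal_conjTranspose, mul_diagonal, diagonal_mul, Pi.pow_apply,
      Pi.star_apply, star_pow, hconj, inv_pow]
    ring
  ext a b
  rw [sum_apply, Finset.sum_congr rfl fun j _ => hentry a b j, ← sum_mul, diagonal_apply]
  rcases eq_or_ne a b with rfl | hab
  · simp [hne]
  · rw [if_neg hab, geom_sum_eq_zero_of_pow_eq_one, zero_mul]
    · rw [mul_pow, inv_pow, hw, hw, mul_inv_cancel₀ one_ne_zero]
    · rwa [Ne, mul_inv_eq_one₀ (hne b), hinj.eq_iff]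

end Matrix

section Pauli

variable (d : ℕ) [NeZero d]

theorem Xd_pow (i : ℕ) : Xd d ^ i = (Equiv.addRight (i : Fin d)).permMatrix ℂ := by
  induction i with
  | zero => simp
  | succ i ih =>
    rw [pow_succ, ih, Nat.cast_succ]
    ext a b
    simp [Xd, PEquiv.toMatrix_toPEquiv_mul, add_assoc, eq_comm]

theorem Zd_eq_diagonal_pow :
    Zd d = diagonal fun x : Fin d => exp (2 * Real.pi * I / d) ^ ((x : ℕ) + 1) := by
  simp only [Zd, ← exp_nat_mul]
  congr 1
  funext x
  congr 1
  push_cast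
  ring

theorem sum_range_Zd_pow_mul_mul_conjTranspose (B : Matrix (Fin d) (Fin d) ℂ) :
    ∑ j ∈ range d, Zd d ^ j * B * (Zd d ^ j)ᴴ = diagonal fun x => d * B x x := by
  have hζ := isPrimitiveRoot_exp d (NeZero.ne d)
  rw [Zd_eq_diagonal_pow]
  refine sum_range_diagonal_pow_mul_mul_conjTranspose (fun x => ?_) hζ.injective_pow_val_succ B
  rw [pow_right_comm, hζ.pow_eq_one, one_pow]

end Pauli

/-- The generalized Pauli group is a unitary 1-design:
    Σ_{i,j} X^i Z^j A (X^i Z^j)† = d (tr A) 1. -/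
theorem stmt8 (d : ℕ) [NeZero d] (A : Matrix (Fin d) (Fin d) ℂ) :
    ∑ i ∈ Finset.range d, ∑ j ∈ Finset.range d,
      Xd d ^ i * Zd d ^ j * A * (Xd d ^ i * Zd d ^ j)ᴴ = ((d : ℂ) * A.trace) • 1 := by
  calc _ = ∑ i ∈ range d,
          Xd d ^ i * (∑ j ∈ range d, Zd d ^ j * A * (Zd d ^ j)ᴴ) * (Xd d ^ i)ᴴ := by
        simp only [conjTranspose_mul, mul_sum, sum_mul, mul_assoc]
    _ = ∑ x : Fin d, (Equiv.addRight x).permMatrix ℂ * diagonal (fun y => d * A y y) *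
          ((Equiv.addRight x).permMatrix ℂ)ᴴ := by
        rw [sum_range_Zd_pow_mul_mul_conjTranspose, ← Fin.sum_univ_eq_sum_range]
        simp only [Xd_pow, Fin.cast_val_eq_self]
    _ = ((d : ℂ) * A.trace) • 1 := by
        rw [sum_permMatrix_addRight_mul_diagonal_mul_conjTranspose, ← mul_sum, trace]
        rfl
end

section
/- For any Hermitian matrix A and any positive semidefinite matrix ρ, ‖√ρ A √ρ‖_1 ≤ tr(ρ |A|), where |A| = √(A†A). -/
/-! Put `X = √ρ A √ρ` and `C = sign X`, so that `-1 ≤ C ≤ 1` and `‖X‖₁ = tr (C X) = tr (√ρ C √ρ A)`.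
Writing `A = A⁺ - A⁻` and `|A| = A⁺ + A⁻`,
`tr (ρ |A|) - tr (√ρ C √ρ A) = tr (√ρ (1 - C) √ρ A⁺) + tr (√ρ (1 + C) √ρ A⁻)`,
and each term is the trace of a product of two positive semidefinite matrices, hence nonnegative. -/

open ComplexOrder

/-- The positive semidefinite square root of a positive semidefinite matrix
(as defined in Mathlib of December 2024, since removed). -/
noncomputable def Matrix.PosSemidef.sqrt {n : Type*} [Fintype n] [DecidableEq n]
    {𝕜 : Type*} [RCLike 𝕜] {A : Matrix n n 𝕜} (hA : A.PosSemidef) : Matrix n n 𝕜 :=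
  hA.1.eigenvectorUnitary.1 * Matrix.diagonal ((↑) ∘ (√·) ∘ hA.1.eigenvalues) *
    (star hA.1.eigenvectorUnitary : Matrix n n 𝕜)

/-- The trace norm ‖A‖₁ = tr √(A†A). -/
noncomputable def traceNorm {n : Type*} [Fintype n] [DecidableEq n]
    (A : Matrix n n ℂ) : ℝ :=
  ((Matrix.posSemidef_conjTranspose_mul_self A).sqrt.trace).re

open scoped MatrixOrder

namespace Matrix

variable {n 𝕜 : Type*} [Fintype n] [DecidableEq n] [RCLike 𝕜]

lemma PosSemidef.sqrt_eq_cfcSqrt {A : Matrix n n 𝕜} (hA : A.PosSemidef) :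
    hA.sqrt = CFC.sqrt A := by
  rw [CFC.sqrt_eq_real_sqrt A hA.nonneg, cfcₙ_eq_cfc, hA.1.cfc_eq, IsHermitian.cfc,
    Unitary.conjStarAlgAut_apply]
  rfl

lemma sqrt_conjTranspose_mul_self_eq_abs (A : Matrix n n 𝕜) :
    (posSemidef_conjTranspose_mul_self A).sqrt = CFC.abs A := by
  rw [PosSemidef.sqrt_eq_cfcSqrt]
  rfl

lemma trace_mul_nonneg {A B : Matrix n n 𝕜} (hA : 0 ≤ A) (hB : 0 ≤ B) : 0 ≤ (A * B).trace := by
  have h := star_left_conjugate_nonneg hA (CFC.sqrt B)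
  rw [(CFC.sqrt_nonneg B).star_eq] at h
  rw [← CFC.sqrt_mul_sqrt_self B, ← mul_assoc, trace_mul_comm, ← mul_assoc]
  exact (nonneg_iff_posSemidef.mp h).trace_nonneg

lemma abs_eq_cfc_sign_mul {X : Matrix n n 𝕜} (hX : IsSelfAdjoint X) :
    CFC.abs X = cfc (fun x : ℝ => (SignType.sign x : ℝ)) X * X := by
  rw [CFC.abs_eq_cfc_norm X hX]
  conv_rhs => enter [2]; rw [← cfc_id' ℝ X]
  rw [← cfc_mul _ _ X (finite_real_spectrum.continuousOn _)]
  simp only [Real.norm_eq_abs, sign_mul_self]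

lemma neg_one_le_cfc_sign {X : Matrix n n 𝕜} (hX : IsSelfAdjoint X) :
    -1 ≤ cfc (fun x : ℝ => (SignType.sign x : ℝ)) X := by
  simpa using algebraMap_le_cfc _ (-1 : ℝ) X
    (fun x _ => by cases SignType.sign x <;> norm_num) (finite_real_spectrum.continuousOn _)

lemma cfc_sign_le_one (X : Matrix n n 𝕜) :
    cfc (fun x : ℝ => (SignType.sign x : ℝ)) X ≤ 1 :=
  cfc_le_one _ X fun x _ => by cases SignType.sign x <;> norm_num

lemma trace_conjugate_mul_le_trace_mul_abs {S C A : Matrix n n 𝕜} (hC₁ : -1 ≤ C) (hC₂ : C ≤ 1)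
    (hA : IsSelfAdjoint A) :
    (S * C * star S * A).trace ≤ (S * star S * CFC.abs A).trace := by
  have hpos : 0 ≤ S * (1 - C) * star S := star_right_conjugate_nonneg (sub_nonneg.mpr hC₂) S
  have hneg : 0 ≤ S * (1 + C) * star S :=
    star_right_conjugate_nonneg (neg_le_iff_add_nonneg'.mp hC₁) S
  have hsplit : S * star S * CFC.abs A - S * C * star S * A =
      S * (1 - C) * star S * A⁺ + S * (1 + C) * star S * A⁻ := by
    calc _ = S * star S * (A⁺ + A⁻) - S * C * star S * (A⁺ - A⁻) := by
          rw [CFC.posPart_add_negPart A hA, CFC.posPart_sub_negPart A hA]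
      _ = _ := by noncomm_ring
  rw [← sub_nonneg, ← trace_sub, hsplit, trace_add]
  exact add_nonneg (trace_mul_nonneg hpos (CFC.posPart_nonneg A))
    (trace_mul_nonneg hneg (CFC.negPart_nonneg A))

end Matrix

open Matrix in
/-- For Hermitian A and positive semidefinite ρ, ‖√ρ A √ρ‖₁ ≤ tr(ρ|A|). -/
theorem stmt12 (d : ℕ) (A ρ : Matrix (Fin d) (Fin d) ℂ)
    (hA : A.IsHermitian) (hρ : ρ.PosSemidef) :
    traceNorm (hρ.sqrt * A * hρ.sqrt) ≤
      ((ρ * (Matrix.posSemidef_conjTranspose_mul_self A).sqrt).trace).re := by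
  set s := CFC.sqrt ρ
  have hs : star s = s := (CFC.sqrt_nonneg ρ).isSelfAdjoint.star_eq
  have hX : IsSelfAdjoint (s * A * s) := by simpa only [hs] using hA.isSelfAdjoint.conjugate s
  set C := cfc (fun x : ℝ => (SignType.sign x : ℝ)) (s * A * s)
  rw [traceNorm, sqrt_conjTranspose_mul_self_eq_abs, sqrt_conjTranspose_mul_self_eq_abs,
    hρ.sqrt_eq_cfcSqrt, abs_eq_cfc_sign_mul hX, ← CFC.sqrt_mul_sqrt_self ρ hρ.nonneg]
  calc (C * (s * A * s)).trace.re = (s * C * star s * A).trace.re := by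
        rw [hs, ← mul_assoc, ← mul_assoc, trace_mul_comm, ← mul_assoc, ← mul_assoc]
    _ ≤ (s * star s * CFC.abs A).trace.re :=
        (Complex.le_def.mp (trace_conjugate_mul_le_trace_mul_abs
          (neg_one_le_cfc_sign hX) (cfc_sign_le_one _) hA.isSelfAdjoint)).1
    _ = (s * s * CFC.abs A).trace.re := by rw [hs]
end

section
/- Suppose d ≥ 3, x_i, x_i' > 0 for i = 1,...,d, x_1^↓ > Σ_{i=2}^d x_i^↓ is false and in fact x_1^↓ < Σ_{i=2}^d x_i^↓ (equivalently all diagonal entries less than 1/2 after normalization), likewise for x'. If Ang(x) ⊆ Ang(x'), then x' = s·x for some real s > 0. -/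
/-!
Dividing by the last direction identifies `Ang(x)` with the closed polygons with side lengths `x`
up to rotation, so `Ang(x) ⊆ Ang(x')` says that every closed polygon with sides `x` still closes
when its sides are rescaled to `x'` with the same directions. Fix two sides `i ≠ j`. By the strict
polygon inequality the other sides can be arranged to leave a gap `t` with
`|x_i - x_j| < t < x_i + x_j`, and the triangle with sides `x_i, x_j, t` closes it in two
mirror-image ways, in which side `i` points in a non-real direction `ω` and in `conj ω`. Both
polygons also close for `x'`; subtracting gives `(x'_i x_j - x_i x'_j) (ω - conj ω) = 0`, so all
ratios `x'_i / x_i` agree.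
-/

open Finset

theorem exists_norm_add_mul_eq (z : ℂ) {a t : ℝ} (ha : 0 ≤ a) (hlo : |‖z‖ - a| ≤ t)
    (hhi : t ≤ ‖z‖ + a) : ∃ ω : ℂ, ‖ω‖ = 1 ∧ ‖z + a * ω‖ = t := by
  set u := Complex.exp (z.arg * Complex.I)
  have hu : ‖u‖ = 1 := Complex.norm_exp_ofReal_mul_I _
  have hz : z = ‖z‖ * u := (Complex.norm_mul_exp_arg_mul_I z).symm
  have hmin : ‖z + a * -u‖ = |‖z‖ - a| := by
    rw [show z + a * -u = ((‖z‖ - a : ℝ) : ℂ) * u by push_cast; linear_combination hz,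
      norm_mul, hu, mul_one, Complex.norm_real, Real.norm_eq_abs]
  have hmax : ‖z + a * u‖ = ‖z‖ + a := by
    rw [show z + a * u = ((‖z‖ + a : ℝ) : ℂ) * u by push_cast; linear_combination hz,
      norm_mul, hu, mul_one, Complex.norm_real, Real.norm_of_nonneg (by positivity)]
  have hS : IsPreconnected (Metric.sphere (0 : ℂ) 1) :=
    (isConnected_sphere (by simp) 0 zero_le_one).isPreconnected
  obtain ⟨ω, hω, hωt⟩ := hS.intermediate_value (a := -u) (b := u) (by simpa using hu)
    (by simpa using hu) (f := fun ω => ‖z + a * ω‖) (by fun_prop)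
    ⟨hmin ▸ hlo, hmax ▸ hhi⟩
  exact ⟨ω, by simpa using hω, hωt⟩

theorem exists_norm_add_mul_eq_of_im_ne_zero {r a b : ℝ} (hlo : |a - b| < r) (hhi : r < a + b) :
    ∃ ω : ℂ, ‖ω‖ = 1 ∧ ‖r + a * ω‖ = b ∧ ω.im ≠ 0 := by
  obtain ⟨hab, hba⟩ := abs_lt.1 hlo
  have hr : ‖(r : ℂ)‖ = r := by rw [Complex.norm_real, Real.norm_of_nonneg (by linarith)]
  obtain ⟨ω, hω, hb⟩ := exists_norm_add_mul_eq r (a := a) (t := b) (by linarith)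
    (by rw [hr, abs_le]; constructor <;> linarith)
    (by rw [hr]; linarith)
  refine ⟨ω, hω, hb, fun him => ?_⟩
  -- a real unit is `±1`, and `|r ± a| = b` is excluded by the strict inequalities
  have hωr : ω = (ω.re : ℂ) := Complex.ext rfl (by simpa using him)
  rw [hωr, Complex.norm_real, Real.norm_eq_abs] at hω
  rw [hωr, ← Complex.ofReal_mul, ← Complex.ofReal_add, Complex.norm_real, Real.norm_eq_abs] at hb
  rcases abs_eq zero_le_one |>.1 hω with h | h <;> rw [h] at hb <;>
    rcases abs_eq (by linarith) |>.1 hb with h' | h' <;> linarith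

theorem exists_sum_mul_eq_of_polygon {ι : Type*} [DecidableEq ι] (y : ι → ℝ) (s : Finset ι)
    (hy : ∀ k ∈ s, 0 ≤ y k) (z : ℂ) (hz : ‖z‖ ≤ ∑ k ∈ s, y k)
    (hpoly : ∀ k ∈ s, 2 * y k ≤ ‖z‖ + ∑ k ∈ s, y k) :
    ∃ ω : ι → ℂ, (∀ k, ‖ω k‖ = 1) ∧ ∑ k ∈ s, y k * ω k = z := by
  induction s using Finset.induction_on generalizing z with
  | empty =>
    refine ⟨fun _ => 1, fun _ => norm_one, ?_⟩
    simpa using (norm_le_zero_iff.1 (by simpa using hz)).symm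
  | insert a s ha ih =>
    rw [sum_insert ha] at hz hpoly
    have hya := hy a (mem_insert_self a s)
    have hys : ∀ k ∈ s, 0 ≤ y k := fun k hk => hy k (mem_insert_of_mem hk)
    have hle : ∀ k ∈ s, y k ≤ ∑ k ∈ s, y k := fun k hk => single_le_sum hys hk
    have hpa := hpoly a (mem_insert_self a s)
    have hz0 := norm_nonneg z
    -- side `a` leaves the other sides a gap of length `min (∑ k ∈ s, y k) (‖z‖ + y a)` to close
    obtain ⟨ωa, hωa, hgap⟩ := exists_norm_add_mul_eq z hya (t := min (∑ k ∈ s, y k) (‖z‖ + y a))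
      (le_min (abs_le.2 ⟨by linarith, by linarith⟩) (abs_le.2 ⟨by linarith, by linarith⟩))
      (min_le_right _ _)
    obtain ⟨η, hη, hsum⟩ := ih hys (z + y a * ωa) (hgap ▸ min_le_left _ _) fun k hk => by
      have hpk := hpoly k (mem_insert_of_mem hk)
      have hgap_ge : 2 * y k - ∑ k ∈ s, y k ≤ min (∑ k ∈ s, y k) (‖z‖ + y a) :=
        le_min (by linarith [hle k hk]) (by linarith)
      linarith
    refine ⟨Function.update η a (-ωa), fun k => ?_, ?_⟩
    · rcases eq_or_ne k a with rfl | hk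
      · simpa using hωa
      · simpa [hk] using hη k
    · rw [sum_insert ha, Function.update_self,
        sum_congr rfl fun k hk => by rw [Function.update_of_ne (ne_of_mem_of_not_mem hk ha)], hsum]
      ring

theorem exists_pos_smul_of_mul_eq_mul {ι : Type*} [Nonempty ι] {y y' : ι → ℝ} (hy : ∀ k, 0 < y k)
    (hy' : ∀ k, 0 < y' k) (h : ∀ i j, y' i * y j = y i * y' j) : ∃ s : ℝ, 0 < s ∧ y' = s • y := by
  obtain ⟨i⟩ := ‹Nonempty ι›
  refine ⟨y' i / y i, div_pos (hy' i) (hy i), funext fun j => ?_⟩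
  rw [Pi.smul_apply, smul_eq_mul, div_mul_eq_mul_div, h, mul_div_cancel_left₀ _ (hy i).ne']

section Polygon

variable {ι : Type*} [Fintype ι]

/-- `Ang` without the normalisation of the last direction to `1`. -/
def closingDirections (y : ι → ℝ) : Set (ι → ℂ) :=
  {ω | (∀ k, ‖ω k‖ = 1) ∧ ∑ k, (y k : ℂ) * ω k = 0}

variable [DecidableEq ι]

theorem sum_eq_add_add_sum_erase_erase {M : Type*} [AddCommMonoid M] (f : ι → M) {i j : ι}
    (hij : i ≠ j) : ∑ k, f k = f i + f j + ∑ k ∈ (univ.erase i).erase j, f k := by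
  rw [← add_sum_erase univ f (mem_univ i), ← add_sum_erase _ f (mem_erase.2 ⟨hij.symm, mem_univ j⟩),
    add_assoc]

theorem sum_mul_ite_ite (c β : ι → ℂ) {i j : ι} (hij : i ≠ j) (p q : ℂ) :
    ∑ k, c k * (if k = i then p else if k = j then q else β k) =
      c i * p + c j * q + ∑ k ∈ (univ.erase i).erase j, c k * β k := by
  rw [sum_eq_add_add_sum_erase_erase _ hij, if_pos rfl, if_neg hij.symm, if_pos rfl]
  congr 1
  refine sum_congr rfl fun k hk => ?_
  obtain ⟨hkj, hki, -⟩ := mem_erase.1 hk |>.imp_right mem_erase.1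
  rw [if_neg hki, if_neg hkj]

theorem exists_gap_of_polygon {y : ι → ℝ} (hy : ∀ k, 0 < y k) (hpoly : ∀ k, 2 * y k < ∑ l, y l)
    {i j : ι} (hij : i ≠ j) : ∃ t, |y i - y j| < t ∧ t < y i + y j ∧
      t ≤ ∑ k ∈ (univ.erase i).erase j, y k ∧
      ∀ k ∈ (univ.erase i).erase j, 2 * y k ≤ t + ∑ k ∈ (univ.erase i).erase j, y k := by
  set s := (univ.erase i).erase j
  set S := ∑ k ∈ s, y k
  have hsplit : ∑ l, y l = y i + y j + S := sum_eq_add_add_sum_erase_erase y hij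
  obtain ⟨m, -, hm⟩ := univ.exists_max_image y ⟨i, mem_univ i⟩
  have hpi := hpoly i
  have hpj := hpoly j
  have hpm := hpoly m
  have hyi := hy i
  have hyj := hy j
  -- `ε / 2` is a margin below `y i + y j` that keeps every side shorter than the rest
  set ε := min (∑ l, y l - 2 * y m) (min (y i) (y j))
  have hε : 0 < ε := lt_min (by linarith) (lt_min hyi hyj)
  have hεm : ε ≤ ∑ l, y l - 2 * y m := min_le_left _ _
  have hεi : ε ≤ y i := (min_le_right _ _).trans (min_le_left _ _)
  have hεj : ε ≤ y j := (min_le_right _ _).trans (min_le_right _ _)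
  refine ⟨min S (y i + y j - ε / 2), ?_, ?_, min_le_left _ _, fun k hk => ?_⟩
  · exact lt_min (abs_lt.2 ⟨by linarith, by linarith⟩) (abs_lt.2 ⟨by linarith, by linarith⟩)
  · linarith [min_le_right S (y i + y j - ε / 2)]
  · have hkS : y k ≤ S := single_le_sum (fun l _ => (hy l).le) hk
    have : 2 * y k - S ≤ min S (y i + y j - ε / 2) :=
      le_min (by linarith) (by linarith [hm k (mem_univ k)])
    linarith

theorem mul_eq_mul_of_closingDirections_subset {y y' : ι → ℝ} (hy : ∀ k, 0 < y k)
    (hpoly : ∀ k, 2 * y k < ∑ l, y l) (h : closingDirections y ⊆ closingDirections y')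
    (i j : ι) : y' i * y j = y i * y' j := by
  rcases eq_or_ne i j with rfl | hij
  · ring
  obtain ⟨t, hlo, hhi, hS, hpolyS⟩ := exists_gap_of_polygon hy hpoly hij
  have ht : ‖(t : ℂ)‖ = t := by
    rw [Complex.norm_real, Real.norm_of_nonneg ((abs_nonneg _).trans hlo.le)]
  obtain ⟨β, hβ, hβt⟩ := exists_sum_mul_eq_of_polygon y _ (fun k _ => (hy k).le) t
    (by rwa [ht]) (by rwa [ht])
  obtain ⟨ω, hω, hωj, him⟩ := exists_norm_add_mul_eq_of_im_ne_zero hlo hhi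
  have hyj : (y j : ℂ) ≠ 0 := Complex.ofReal_ne_zero.2 (hy j).ne'
  -- the sides `i` and `j` close the gap `t` left by the others, in two mirror-image ways
  let ν (p : ℂ) : ι → ℂ := fun k => if k = i then p else if k = j then -(t + y i * p) / y j else β k
  have hν : ∀ p : ℂ, ‖p‖ = 1 → ‖t + y i * p‖ = y j → ν p ∈ closingDirections y := by
    intro p hp hpj
    refine ⟨fun k => ?_, ?_⟩
    · simp only [ν]
      split_ifs
      · exact hp
      · rw [norm_div, norm_neg, hpj, Complex.norm_real, Real.norm_of_nonneg (hy j).le,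
          div_self (hy j).ne']
      · exact hβ k
    · rw [sum_mul_ite_ite _ _ hij, hβt]
      field_simp
      ring
  have hconj : ‖t + y i * (starRingEnd ℂ) ω‖ = y j := by
    rw [← hωj, ← Complex.norm_conj]; simp
  have h1 := (h (hν ω hω hωj)).2
  have h2 := (h (hν _ (by rw [Complex.norm_conj, hω]) hconj)).2
  rw [sum_mul_ite_ite _ _ hij] at h1 h2
  have hdiff : ω - (starRingEnd ℂ) ω ≠ 0 := by
    rw [Complex.sub_conj]; simpa [Complex.I_ne_zero] using him
  have : ((y' i * y j : ℝ) : ℂ) = ((y i * y' j : ℝ) : ℂ) := by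
    apply mul_right_cancel₀ hdiff
    field_simp at h1 h2
    push_cast
    linear_combination h1 - h2
  exact_mod_cast this

end Polygon

def ang {d : ℕ} (x : Fin (d + 1) → ℝ) : Set (Fin d → ℂ) :=
  {ω | (∀ i, ‖ω i‖ = 1) ∧ (∑ i : Fin d, (x i.castSucc : ℂ) * ω i) + (x (Fin.last d) : ℂ) = 0}

theorem closingDirections_subset_of_ang_subset {d : ℕ} {x x' : Fin (d + 1) → ℝ}
    (h : ang x ⊆ ang x') : closingDirections x ⊆ closingDirections x' := by
  rintro ω ⟨hω, hsum⟩
  have hL : ω (Fin.last d) ≠ 0 := norm_ne_zero_iff.1 (by simp [hω])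
  have hdiv (y : Fin (d + 1) → ℝ) :
      (∑ i : Fin d, (y i.castSucc : ℂ) * (ω i.castSucc / ω (Fin.last d))) + y (Fin.last d) =
        (∑ k, (y k : ℂ) * ω k) / ω (Fin.last d) := by
    rw [Fin.sum_univ_castSucc, add_div, sum_div, mul_div_cancel_right₀ _ hL]
    simp only [mul_div_assoc]
  have hmem : (fun i : Fin d => ω i.castSucc / ω (Fin.last d)) ∈ ang x :=
    ⟨fun i => by rw [norm_div, hω, hω, div_one], by rw [hdiv, hsum, zero_div]⟩
  have hx' := (h hmem).2
  rw [hdiv] at hx'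
  exact ⟨hω, (div_eq_zero_iff.1 hx').resolve_right hL⟩

theorem stmt15_general (d : ℕ) (x x' : Fin (d + 1) → ℝ)
    (hx : ∀ i, 0 < x i) (hx' : ∀ i, 0 < x' i)
    (hpoly : ∀ i, 2 * x i < ∑ j, x j)
    (hsub : {ω : Fin d → ℂ | (∀ i, ‖ω i‖ = 1) ∧
        (∑ i : Fin d, (x i.castSucc : ℂ) * ω i) + (x (Fin.last d) : ℂ) = 0} ⊆
      {ω : Fin d → ℂ | (∀ i, ‖ω i‖ = 1) ∧
        (∑ i : Fin d, (x' i.castSucc : ℂ) * ω i) + (x' (Fin.last d) : ℂ) = 0}) :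
    ∃ s : ℝ, 0 < s ∧ x' = s • x :=
  exists_pos_smul_of_mul_eq_mul hx hx'
    (mul_eq_mul_of_closingDirections_subset hx hpoly (closingDirections_subset_of_ang_subset hsub))

/-- If d ≥ 3, all entries of x, x' are positive, both satisfy the strict polygon
    inequality (every entry is less than the sum of the others), and
    Ang(x) ⊆ Ang(x'), then x' is a positive multiple of x. -/
theorem stmt15 (d : ℕ) (hd : 2 ≤ d) (x x' : Fin (d + 1) → ℝ)
    (hx : ∀ i, 0 < x i) (hx' : ∀ i, 0 < x' i)
    (hpoly : ∀ i, 2 * x i < ∑ j, x j) (hpoly' : ∀ i, 2 * x' i < ∑ j, x' j)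
    (hsub : {ω : Fin d → ℂ | (∀ i, ‖ω i‖ = 1) ∧
        (∑ i : Fin d, (x i.castSucc : ℂ) * ω i) + (x (Fin.last d) : ℂ) = 0} ⊆
      {ω : Fin d → ℂ | (∀ i, ‖ω i‖ = 1) ∧
        (∑ i : Fin d, (x' i.castSucc : ℂ) * ω i) + (x' (Fin.last d) : ℂ) = 0}) :
    ∃ s : ℝ, 0 < s ∧ x' = s • x :=
  stmt15_general d x x' hx hx' hpoly hsub
end
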